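/- Let D_B, D_E be M×M diagonal complex matrices with diagonal entries H_B(f_m), H_E(f_m), all nonzero. Then sup over diagonal PSD matrices R with tr(R) ≤ P of log det(I + D_B R D_Bᴴ) − log det(I + D_E R D_Eᴴ) tends, as P → ∞, to Σ_{m=1}^M [log(|H_B(f_m)|²/|H_E(f_m)|²)]⁺. -/

import Mathlib

open Matrix Filter ComplexOrder

open Real Topology

/-!
For a diagonal covariance `R = diag(x)` the objective splits into per-subcarrier terms
`log (1 + b x) - log (1 + e x)` with `b = |H_B|²`, `e = |H_E|²`. Each term is at most
`[log (b / e)]⁺`, so this sum bounds the supremum for every `P`; conversely, putting power `P / M`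
on every subcarrier with `b > e` and none elsewhere is feasible, and its value tends to the same
sum as `P → ∞`. The supremum is squeezed between the two.
-/

lemma tendsto_csSup_of_forall_le_of_tendsto {α β : Type*} [ConditionallyCompleteLinearOrder β]
    [TopologicalSpace β] [OrderTopology β] {l : Filter α} {S : α → Set β} {v : α → β} {L : β}
    (hle : ∀ a, ∀ c ∈ S a, c ≤ L) (hmem : ∀ᶠ a in l, v a ∈ S a) (hv : Tendsto v l (𝓝 L)) :
    Tendsto (fun a => sSup (S a)) l (𝓝 L) := by
  refine tendsto_of_tendsto_of_tendsto_of_le_of_le' hv tendsto_const_nhds ?_ ?_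
  · filter_upwards [hmem] with a ha using le_csSup ⟨L, hle a⟩ ha
  · filter_upwards [hmem] with a ha using csSup_le ⟨v a, ha⟩ (hle a)

lemma log_one_add_mul_sub_log_one_add_mul_le {b e x : ℝ} (hb : 0 ≤ b) (he : 0 < e)
    (hx : 0 ≤ x) : log (1 + b * x) - log (1 + e * x) ≤ max (log (b / e)) 0 := by
  have hbx : 0 < 1 + b * x := by positivity
  rcases le_or_gt b e with hbe | heb
  · have : log (1 + b * x) ≤ log (1 + e * x) := log_le_log hbx (by nlinarith)
    linarith [le_max_right (log (b / e)) 0]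
  · refine le_trans ?_ (le_max_left _ _)
    rw [← log_div hbx.ne' (by positivity)]
    apply log_le_log (by positivity)
    rw [div_le_div_iff₀ (by positivity) he]
    nlinarith

lemma tendsto_log_one_add_mul_sub_log_one_add_mul {b e : ℝ} (hb : 0 < b) (he : 0 < e) :
    Tendsto (fun t => log (1 + b * t) - log (1 + e * t)) atTop (𝓝 (log (b / e))) := by
  have hratio : Tendsto (fun t : ℝ => (t⁻¹ + b) / (t⁻¹ + e)) atTop (𝓝 (b / e)) := by
    have h := (tendsto_inv_atTop_zero.add_const b).div (tendsto_inv_atTop_zero.add_const e)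
      (by simpa using he.ne')
    rwa [zero_add, zero_add] at h
  refine ((continuousAt_log (div_pos hb he).ne').tendsto.comp hratio).congr' ?_
  filter_upwards [eventually_gt_atTop 0] with t ht
  have hrw : (t⁻¹ + b) / (t⁻¹ + e) = (1 + b * t) / (1 + e * t) := by field_simp
  simp only [Function.comp_apply, hrw]
  exact log_div (by positivity) (by positivity)

lemma tendsto_log_one_add_mul_sub_log_one_add_mul_ite {b e : ℝ} (hb : 0 ≤ b) (he : 0 < e) :
    Tendsto (fun t => log (1 + b * (if e < b then t else 0)) -
      log (1 + e * (if e < b then t else 0))) atTop (𝓝 (max (log (b / e)) 0)) := by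
  split_ifs with heb
  · rw [max_eq_left (log_nonneg ((one_le_div he).2 heb.le))]
    exact tendsto_log_one_add_mul_sub_log_one_add_mul (he.trans heb) he
  · rw [max_eq_right (log_nonpos (by positivity) ((div_le_one he).2 (not_lt.1 heb)))]
    simp

lemma Matrix.PosSemidef.eq_diagonal_ofReal_re_diag {n : Type*} [Fintype n] [DecidableEq n]
    {R : Matrix n n ℂ} (hR : R.PosSemidef) (hd : R.IsDiag) :
    R = diagonal fun i => ((R i i).re : ℂ) := by
  conv_lhs => rw [← hd.diagonal_diag]
  congr 1
  funext i
  exact Complex.eq_re_of_ofReal_le (r := 0) (by rw [Complex.ofReal_zero]; exact hR.diag_nonneg)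

lemma Matrix.re_det_one_add_diagonal_mul_diagonal_mul_conjTranspose {n : Type*} [Fintype n]
    [DecidableEq n] (d : n → ℂ) (x : n → ℝ) :
    (1 + diagonal d * diagonal (fun i => (x i : ℂ)) * (diagonal d)ᴴ).det.re
      = ∏ i, (1 + ‖d i‖ ^ 2 * x i) := by
  have hentry : ∀ i, 1 + d i * x i * star (d i) = ((1 + ‖d i‖ ^ 2 * x i : ℝ) : ℂ) := by
    intro i
    rw [Complex.star_def, mul_right_comm, Complex.mul_conj, Complex.normSq_eq_norm_sq]
    push_cast
    ring
  simp only [diagonal_conjTranspose, diagonal_mul_diagonal, ← diagonal_one, diagonal_add,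
    det_diagonal, Pi.star_apply, hentry, ← Complex.ofReal_prod, Complex.ofReal_re]

lemma Matrix.log_det_sub_log_det_diagonal {n : Type*} [Fintype n] [DecidableEq n]
    (dB dE : n → ℂ) {x : n → ℝ} (hx : 0 ≤ x) :
    log (1 + diagonal dB * diagonal (fun i => (x i : ℂ)) * (diagonal dB)ᴴ).det.re -
        log (1 + diagonal dE * diagonal (fun i => (x i : ℂ)) * (diagonal dE)ᴴ).det.re
      = ∑ i, (log (1 + ‖dB i‖ ^ 2 * x i) - log (1 + ‖dE i‖ ^ 2 * x i)) := by
  have hpos : ∀ (d : n → ℂ) i, 1 + ‖d i‖ ^ 2 * x i ≠ 0 := fun d i =>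
    (add_pos_of_pos_of_nonneg one_pos (mul_nonneg (sq_nonneg _) (hx i))).ne'
  rw [re_det_one_add_diagonal_mul_diagonal_mul_conjTranspose,
    re_det_one_add_diagonal_mul_diagonal_mul_conjTranspose,
    log_prod fun i _ => hpos dB i, log_prod fun i _ => hpos dE i, Finset.sum_sub_distrib]

theorem ofdm_high_snr_secrecy_general (M : ℕ) (dB dE : Fin M → ℂ)
    (hE : ∀ m, dE m ≠ 0) :
    Tendsto (fun P : ℝ => sSup { c : ℝ | ∃ R : Matrix (Fin M) (Fin M) ℂ,
        R.PosSemidef ∧ R.IsDiag ∧ R.trace.re ≤ P ∧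
        c = Real.log ((1 + Matrix.diagonal dB * R * (Matrix.diagonal dB)ᴴ).det.re) -
            Real.log ((1 + Matrix.diagonal dE * R * (Matrix.diagonal dE)ᴴ).det.re) })
      atTop
      (nhds (∑ m : Fin M,
        max (Real.log (‖dB m‖ ^ 2 / ‖dE m‖ ^ 2)) 0)) := by
  have he : ∀ m, 0 < ‖dE m‖ ^ 2 := fun m => pow_pos (norm_pos_iff.2 (hE m)) 2
  set x : ℝ → Fin M → ℝ := fun P m => if ‖dE m‖ ^ 2 < ‖dB m‖ ^ 2 then P / M else 0
  have hx : ∀ P, 0 ≤ P → 0 ≤ x P := fun P hP m => by positivity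
  have htrace : ∀ P, 0 ≤ P → (diagonal fun m => (x P m : ℂ)).trace.re ≤ P := fun P hP => by
    calc (diagonal fun m => (x P m : ℂ)).trace.re = ∑ m, x P m := by simp [trace_diagonal]
      _ ≤ ∑ _m : Fin M, P / M := Finset.sum_le_sum fun m _ => by
          simp only [x]; split_ifs; exacts [le_rfl, by positivity]
      _ ≤ P := by
          rw [Finset.sum_const, Finset.card_univ, Fintype.card_fin, nsmul_eq_mul]
          rcases eq_or_ne (M : ℝ) 0 with hM | hM
          · simp [hM, hP]
          · rw [mul_div_cancel₀ _ hM]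
  refine tendsto_csSup_of_forall_le_of_tendsto
    (v := fun P => ∑ m, (log (1 + ‖dB m‖ ^ 2 * x P m) - log (1 + ‖dE m‖ ^ 2 * x P m)))
    ?_ ?_ ?_
  · rintro P c ⟨R, hR, hRd, -, rfl⟩
    have hRre : ∀ m, 0 ≤ (R m m).re := fun m => (Complex.nonneg_iff.1 hR.diag_nonneg).1
    rw [hR.eq_diagonal_ofReal_re_diag hRd, log_det_sub_log_det_diagonal _ _ hRre]
    exact Finset.sum_le_sum fun m _ =>
      log_one_add_mul_sub_log_one_add_mul_le (by positivity) (he m) (hRre m)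
  · filter_upwards [eventually_ge_atTop 0] with P hP
    exact ⟨_, .diagonal fun m => by simpa using hx P hP m, isDiag_diagonal _, htrace P hP,
      (log_det_sub_log_det_diagonal _ _ (hx P hP)).symm⟩
  · exact tendsto_finsetSum _ fun m _ =>
      (tendsto_log_one_add_mul_sub_log_one_add_mul_ite (by positivity) (he m)).comp
        (tendsto_id.atTop_div_const (by exact_mod_cast m.pos))

/-- High-SNR CP-OFDM secrecy capacity with conventional OFDM receivers: with diagonal
channel matrices `D_B = diag(H_B(f_m))`, `D_E = diag(H_E(f_m))` (all entries nonzero),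
the supremum over diagonal PSD input covariances `R` with `tr R ≤ P` of
`log det(I + D_B R D_Bᴴ) − log det(I + D_E R D_Eᴴ)` tends, as `P → ∞`, to
`Σ_m [log(|H_B(f_m)|²/|H_E(f_m)|²)]⁺`. -/
theorem ofdm_high_snr_secrecy (M : ℕ) (dB dE : Fin M → ℂ)
    (hB : ∀ m, dB m ≠ 0) (hE : ∀ m, dE m ≠ 0) :
    Tendsto (fun P : ℝ => sSup { c : ℝ | ∃ R : Matrix (Fin M) (Fin M) ℂ,
        R.PosSemidef ∧ R.IsDiag ∧ R.trace.re ≤ P ∧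
        c = Real.log ((1 + Matrix.diagonal dB * R * (Matrix.diagonal dB)ᴴ).det.re) -
            Real.log ((1 + Matrix.diagonal dE * R * (Matrix.diagonal dE)ᴴ).det.re) })
      atTop
      (nhds (∑ m : Fin M,
        max (Real.log (‖dB m‖ ^ 2 / ‖dE m‖ ^ 2)) 0)) :=
  ofdm_high_snr_secrecy_general M dB dE hE
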